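/- With λ̄ and ρ̄ as defined, if G is a short game not equal to an integer, then λ̄(G) > ρ̄(G). (Equivalently: if λ̄(G) ≤ ρ̄(G) then G is equal to an integer.) -/

import Mathlib

noncomputable section

namespace SetTheory

universe u

/-- Pre-game (reconstruction of the removed Mathlib `SetTheory.PGame`). -/
inductive PGame : Type (u + 1)
  | mk : ∀ α β : Type u, (α → PGame) → (β → PGame) → PGame

namespace PGame

def LeftMoves : PGame.{u} → Type u
  | mk l _ _ _ => l

def RightMoves : PGame.{u} → Type u
  | mk _ r _ _ => r

def moveLeft : ∀ g : PGame.{u}, LeftMoves g → PGame.{u}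
  | mk _ _ L _ => L

def moveRight : ∀ g : PGame.{u}, RightMoves g → PGame.{u}
  | mk _ _ _ R => R

/-- The pair `(x ≤ y, x ⧏ y)`, as in old Mathlib. -/
def leLf (x : PGame.{u}) : PGame.{u} → Prop × Prop :=
  PGame.rec (motive := fun _ => PGame.{u} → Prop × Prop)
    (fun xl xr xL xR IHxl IHxr y =>
      PGame.rec (motive := fun _ => Prop × Prop)
        (fun yl yr yL yR IHyl IHyr =>
          ((∀ i : xl, (IHxl i (mk yl yr yL yR)).2) ∧ ∀ j : yr, (IHyr j).2,
           (∃ i : yl, (IHyl i).1) ∨ ∃ j : xr, (IHxr j (mk yl yr yL yR)).1)) y) x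

/-- `x ≤ y` on pregames. -/
def Le (x y : PGame.{u}) : Prop := (leLf x y).1

/-- `x ≈ y` on pregames. -/
def Equiv (x y : PGame.{u}) : Prop := Le x y ∧ Le y x

def neg : PGame.{u} → PGame.{u}
  | mk l r L R => mk r l (fun i => neg (R i)) (fun i => neg (L i))

instance : Neg PGame.{u} := ⟨neg⟩

def add (x : PGame.{u}) : PGame.{u} → PGame.{u} :=
  PGame.rec (motive := fun _ => PGame.{u} → PGame.{u})
    (fun xl xr _ _ IHxl IHxr y =>
      PGame.rec (motive := fun _ => PGame.{u})
        (fun yl yr yL yR IHyl IHyr =>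
          mk (xl ⊕ yl) (xr ⊕ yr)
            (Sum.elim (fun i => IHxl i (mk yl yr yL yR)) IHyl)
            (Sum.elim (fun j => IHxr j (mk yl yr yL yR)) IHyr)) y) x

instance : Add PGame.{u} := ⟨add⟩

instance : Sub PGame.{u} := ⟨fun x y => x + -y⟩

instance : Zero PGame.{u} := ⟨mk PEmpty PEmpty PEmpty.elim PEmpty.elim⟩

instance : One PGame.{u} := ⟨mk PUnit PEmpty (fun _ => 0) PEmpty.elim⟩

def powHalf : ℕ → PGame.{u}
  | 0 => 1
  | n + 1 => mk PUnit PUnit (fun _ => 0) (fun _ => powHalf n)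

/-- Short pregames, as in old Mathlib. -/
class inductive Short : PGame.{u} → Type (u + 1)
  | mk : ∀ {α β : Type u} {L : α → PGame.{u}} {R : β → PGame.{u}}
      (_ : ∀ i : α, Short (L i)) (_ : ∀ j : β, Short (R j)) [Fintype α] [Fintype β],
      Short (mk α β L R)

/-- Game equivalence (`Equiv` is an equivalence relation, so its equivalence closure is itself). -/
instance setoid : Setoid PGame.{u} :=
  ⟨Relation.EqvGen Equiv, Relation.EqvGen.is_equivalence _⟩

def nsmulAux : ℕ → PGame.{u} → PGame.{u}
  | 0, _ => 0
  | n + 1, x => nsmulAux n x + x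

end PGame

/-- Games: pregames up to equivalence. -/
abbrev Game : Type (u + 1) := Quotient PGame.setoid.{u}

namespace Game

instance : One Game.{u} := ⟨⟦1⟧⟩

/-- Integer multiples, as the `zsmul` of old Mathlib's group structure on games. -/
instance : SMul ℤ Game.{u} :=
  ⟨fun n a => ⟦if 0 ≤ n then PGame.nsmulAux n.toNat a.out
    else -(PGame.nsmulAux (-n).toNat a.out)⟧⟩

end Game

end SetTheory

end

open SetTheory PGame Classical

noncomputable section

namespace Temper

universe u

/-- `q` is a dyadic rational. -/
def IsDyadic (q : ℚ) : Prop := ∃ (k : ℤ) (m : ℕ), q = (k : ℚ) / 2 ^ m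

/-- Maximum of a set of rationals (junk value if none). -/
def qSup (s : Set ℚ) : ℚ := if h : ∃ a, IsGreatest s a then h.choose else 0

/-- Minimum of a set of rationals (junk value if none). -/
def qInf (s : Set ℚ) : ℚ := if h : ∃ a, IsLeast s a then h.choose else 0

/-- Maximum of a set of integers (junk value if none). -/
def zSup (s : Set ℤ) : ℤ := if h : ∃ a, IsGreatest s a then h.choose else 0

/-- Minimum of a set of integers (junk value if none). -/
def zInf (s : Set ℤ) : ℤ := if h : ∃ a, IsLeast s a then h.choose else 0

/-- `n`-fold sum of a pregame. -/
def nsmulP : ℕ → PGame.{u} → PGame.{u}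
  | 0, _ => 0
  | n + 1, x => nsmulP n x + x

/-- `k`-fold sum of a pregame, for an integer `k`. -/
def zsmulP (k : ℤ) (x : PGame.{u}) : PGame.{u} :=
  if 0 ≤ k then nsmulP k.toNat x else -(nsmulP (-k).toNat x)

/-- A pregame representing the dyadic rational `q` (junk if `q` is not dyadic). -/
def dPGame (q : ℚ) : PGame.{u} := zsmulP q.num (PGame.powHalf (Nat.log 2 q.den))

/-- The game value of the dyadic rational `q`. -/
def dGame (q : ℚ) : Game.{u} := q.num • (⟦PGame.powHalf (Nat.log 2 q.den)⟧ : Game)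

/-- The (value of the) pregame `G` is equal to an integer. -/
def EqInt (G : PGame.{u}) : Prop := ∃ n : ℤ, (⟦G⟧ : Game) = n • (1 : Game)

/-- The (value of the) pregame `G` is equal to a (dyadic rational) number. -/
def EqNum (G : PGame.{u}) : Prop := ∃ q : ℚ, IsDyadic q ∧ (⟦G⟧ : Game) = dGame q

/-- The pair `(λ̄(G), ρ̄(G))`. -/
def lrBar : PGame.{u} → ℤ × ℤ
  | PGame.mk α β L R =>
    if h : EqInt (PGame.mk α β L R) then (h.choose, h.choose)
    else (zSup (Set.range fun i : α => (lrBar (L i)).2 + 1),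
          zInf (Set.range fun j : β => (lrBar (R j)).1 - 1))

/-- `λ̄(G)`. -/
def lBar (G : PGame.{u}) : ℤ := (lrBar G).1

/-- `ρ̄(G)`. -/
def rBar (G : PGame.{u}) : ℤ := (lrBar G).2

/-- Left and Right stops of a pregame. -/
def stops : PGame.{u} → ℚ × ℚ
  | PGame.mk α β L R =>
    if h : EqNum (PGame.mk α β L R) then (h.choose, h.choose)
    else (qSup (Set.range fun i : α => (stops (L i)).2),
          qInf (Set.range fun j : β => (stops (R j)).1))

/-- The Left stop `L(G)`. -/
def Lstop (G : PGame.{u}) : ℚ := (stops G).1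

/-- The Right stop `R(G)`. -/
def Rstop (G : PGame.{u}) : ℚ := (stops G).2

/-- `G` is numberish: infinitesimally close to a number. -/
def Numberish (G : PGame.{u}) : Prop := Lstop G = Rstop G

/-- The data of temperature theory attached to a game: the walls `λ_t(G)`, `ρ_t(G)`
of the thermograph, the temperature `t(G)` (which is `⊥ = -∞` for integers), and the
cooled games `G_t`. -/
structure ThermoData : Type (u + 1) where
  lam : ℚ → ℚ
  rho : ℚ → ℚ
  temp : WithBot ℚ
  cool : ℚ → PGame.{u}

/-- The standard temperature-theory recursion. -/
def thermo : PGame.{u} → ThermoData.{u}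
  | PGame.mk α β L R =>
    if h : EqInt (PGame.mk α β L R) then
      { lam := fun _ => (h.choose : ℚ)
        rho := fun _ => (h.choose : ℚ)
        temp := ⊥
        cool := fun _ => dPGame (h.choose : ℚ) }
    else
      let lamT : ℚ → ℚ := fun t => qSup (Set.range fun i : α => (thermo (L i)).rho t - t)
      let rhoT : ℚ → ℚ := fun t => qInf (Set.range fun j : β => (thermo (R j)).lam t + t)
      let tG : ℚ :=
        if h2 : ∃ t, IsLeast {t : ℚ | IsDyadic t ∧ lamT t = rhoT t} t then h2.choose else 0
      { lam := fun t => if t ≤ tG then lamT t else lamT tG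
        rho := fun t => if t ≤ tG then rhoT t else lamT tG
        temp := (tG : WithBot ℚ)
        cool := fun t =>
          if t ≤ tG then
            PGame.mk α β (fun i => (thermo (L i)).cool t - dPGame t)
              (fun j => (thermo (R j)).cool t + dPGame t)
          else dPGame (lamT tG) }

/-- The wall `λ_t(G)`. -/
def lamW (G : PGame.{u}) (t : ℚ) : ℚ := (thermo G).lam t

/-- The wall `ρ_t(G)`. -/
def rhoW (G : PGame.{u}) (t : ℚ) : ℚ := (thermo G).rho t

/-- The temperature `t(G)`. -/
def temp (G : PGame.{u}) : WithBot ℚ := (thermo G).temp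

/-- The cooled game `G_t`. -/
def cool (G : PGame.{u}) (t : ℚ) : PGame.{u} := (thermo G).cool t

/-- `λ̃_t(G) = max_{G^L} (ρ_t(G^L) - t)`. -/
def lamTilde (G : PGame.{u}) (t : ℚ) : ℚ :=
  qSup (Set.range fun i => rhoW (G.moveLeft i) t - t)

/-- `ρ̃_t(G) = min_{G^R} (λ_t(G^R) + t)`. -/
def rhoTilde (G : PGame.{u}) (t : ℚ) : ℚ :=
  qInf (Set.range fun j => lamW (G.moveRight j) t + t)

/-- The formal game `G̃_t = {(G^L)_t - t | (G^R)_t + t}`. -/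
def tildeCool (G : PGame.{u}) (t : ℚ) : PGame.{u} :=
  PGame.mk G.LeftMoves G.RightMoves
    (fun i => cool (G.moveLeft i) t - dPGame t)
    (fun j => cool (G.moveRight j) t + dPGame t)

end Temper

namespace Temper

/-- A piecewise-linear function `ℚ → ℚ` with slopes in `A`, consisting of finitely many
segments (the first and last being half-lines) with dyadic breakpoints and intercepts. -/
def IsTrajWith (A : Set ℚ) (f : ℚ → ℚ) : Prop :=
  ∃ (n : ℕ) (j a b : ℕ → ℚ),
    (∀ i, i < n → j i ≤ j (i + 1)) ∧
    (∀ i, i ≤ n → IsDyadic (j i)) ∧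
    (∀ i, i ≤ n + 1 → a i ∈ A ∧ IsDyadic (b i)) ∧
    (∀ x, x ≤ j 0 → f x = a 0 * x + b 0) ∧
    (∀ i, i < n → ∀ x, j i ≤ x → x ≤ j (i + 1) → f x = a (i + 1) * x + b (i + 1)) ∧
    (∀ x, j n ≤ x → f x = a (n + 1) * x + b (n + 1))

/-- A dyadic trajectory: slopes in `{-1, 0, 1}`. -/
def IsDyadicTrajectory (f : ℚ → ℚ) : Prop := IsTrajWith {-1, 0, 1} f

/-- `f` has a mast with mast value `c`: it is eventually constant equal to `c`. -/
def HasMastValue (f : ℚ → ℚ) (c : ℚ) : Prop :=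
  ∃ x0 : ℚ, IsDyadic x0 ∧ ∀ x, x0 ≤ x → f x = c

end Temper

namespace Temper

universe u

/-! ### basic theory of the reconstructed pregames -/

/-- The relation `x ⧏ y`. -/
def Lf (x y : PGame.{u}) : Prop := (leLf x y).2

theorem pg_le_mk {xl xr yl yr : Type u} {xL : xl → PGame.{u}} {xR : xr → PGame.{u}}
    {yL : yl → PGame.{u}} {yR : yr → PGame.{u}} :
    PGame.Le (PGame.mk xl xr xL xR) (PGame.mk yl yr yL yR) ↔
      (∀ i, Lf (xL i) (PGame.mk yl yr yL yR)) ∧ ∀ j, Lf (PGame.mk xl xr xL xR) (yR j) :=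
  Iff.rfl

theorem pg_lf_mk {xl xr yl yr : Type u} {xL : xl → PGame.{u}} {xR : xr → PGame.{u}}
    {yL : yl → PGame.{u}} {yR : yr → PGame.{u}} :
    Lf (PGame.mk xl xr xL xR) (PGame.mk yl yr yL yR) ↔
      (∃ i, PGame.Le (PGame.mk xl xr xL xR) (yL i)) ∨ ∃ j, PGame.Le (xR j) (PGame.mk yl yr yL yR) :=
  Iff.rfl

theorem pg_le_def {x y : PGame.{u}} :
    PGame.Le x y ↔ (∀ i, Lf (x.moveLeft i) y) ∧ ∀ j, Lf x (y.moveRight j) := by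
  cases x; cases y; exact Iff.rfl

theorem pg_lf_def {x y : PGame.{u}} :
    Lf x y ↔ (∃ i, PGame.Le x (y.moveLeft i)) ∨ ∃ j, PGame.Le (x.moveRight j) y := by
  cases x; cases y; exact Iff.rfl

theorem pg_lf_of_le_moveLeft {x y : PGame.{u}} (i : y.LeftMoves) (h : PGame.Le x (y.moveLeft i)) :
    Lf x y := pg_lf_def.2 (Or.inl ⟨i, h⟩)

theorem pg_lf_of_moveRight_le {x y : PGame.{u}} (j : x.RightMoves) (h : PGame.Le (x.moveRight j) y) :
    Lf x y := pg_lf_def.2 (Or.inr ⟨j, h⟩)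

theorem pg_moveLeft_lf_of_le {x y : PGame.{u}} (h : PGame.Le x y) (i : x.LeftMoves) :
    Lf (x.moveLeft i) y := (pg_le_def.1 h).1 i

theorem pg_lf_moveRight_of_le {x y : PGame.{u}} (h : PGame.Le x y) (j : y.RightMoves) :
    Lf x (y.moveRight j) := (pg_le_def.1 h).2 j

theorem pg_lf_not_le_aux : ∀ x y : PGame.{u},
    (Lf x y ↔ ¬ PGame.Le y x) ∧ (Lf y x ↔ ¬ PGame.Le x y) := by
  intro x
  induction x with
  | mk xl xr xL xR ihl ihr =>
  intro y
  induction y with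
  | mk yl yr yL yR jhl jhr =>
  refine ⟨?_, ?_⟩
  · rw [pg_lf_mk, pg_le_mk]
    constructor
    · rintro (⟨i, h⟩ | ⟨j, h⟩) ⟨h1, h2⟩
      · exact ((jhl i).2.1 (h1 i)) h
      · exact ((ihr j _).2.1 (h2 j)) h
    · intro h
      by_contra hc
      push_neg at hc
      exact h ⟨fun i => (jhl i).2.2 (hc.1 i), fun j => (ihr j _).2.2 (hc.2 j)⟩
  · rw [pg_lf_mk, pg_le_mk]
    constructor
    · rintro (⟨i, h⟩ | ⟨j, h⟩) ⟨h1, h2⟩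
      · exact ((ihl i _).1.1 (h1 i)) h
      · exact ((jhr j).1.1 (h2 j)) h
    · intro h
      by_contra hc
      push_neg at hc
      exact h ⟨fun i => (ihl i _).1.2 (hc.1 i), fun j => (jhr j).1.2 (hc.2 j)⟩

theorem pg_lf_iff_not_le {x y : PGame.{u}} : Lf x y ↔ ¬ PGame.Le y x := (pg_lf_not_le_aux x y).1

theorem pg_not_le_iff_lf {x y : PGame.{u}} : ¬ PGame.Le x y ↔ Lf y x := pg_lf_iff_not_le.symm

theorem pg_le_refl : ∀ x : PGame.{u}, PGame.Le x x := by
  intro x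
  induction x with
  | mk xl xr xL xR ihl ihr =>
  exact pg_le_def.2 ⟨fun i => pg_lf_of_le_moveLeft i (ihl i), fun j => pg_lf_of_moveRight_le j (ihr j)⟩

theorem pg_le_trans_aux : ∀ x y z : PGame.{u},
    (PGame.Le x y → PGame.Le y z → PGame.Le x z) ∧ (PGame.Le y z → PGame.Le z x → PGame.Le y x) ∧
      (PGame.Le z x → PGame.Le x y → PGame.Le z y) := by
  intro x
  induction x with
  | mk xl xr xL xR ihxl ihxr =>
  intro y
  induction y with
  | mk yl yr yL yR ihyl ihyr =>
  intro z
  induction z with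
  | mk zl zr zL zR ihzl ihzr =>
  refine ⟨fun h1 h2 => ?_, fun h1 h2 => ?_, fun h1 h2 => ?_⟩
  · refine pg_le_def.2 ⟨fun i => ?_, fun j => ?_⟩
    · exact pg_lf_iff_not_le.2 fun h3 =>
        pg_lf_iff_not_le.1 (pg_moveLeft_lf_of_le h1 i) ((ihxl i _ _).2.1 h2 h3)
    · exact pg_lf_iff_not_le.2 fun h3 =>
        pg_lf_iff_not_le.1 (pg_lf_moveRight_of_le h2 j) ((ihzr j).2.2 h3 h1)
  · refine pg_le_def.2 ⟨fun i => ?_, fun j => ?_⟩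
    · exact pg_lf_iff_not_le.2 fun h3 =>
        pg_lf_iff_not_le.1 (pg_moveLeft_lf_of_le h1 i) ((ihyl i (PGame.mk zl zr zL zR)).2.2 h2 h3)
    · exact pg_lf_iff_not_le.2 fun h3 =>
        pg_lf_iff_not_le.1 (pg_lf_moveRight_of_le h2 j)
          ((ihxr j (PGame.mk yl yr yL yR) (PGame.mk zl zr zL zR)).1 h3 h1)
  · refine pg_le_def.2 ⟨fun i => ?_, fun j => ?_⟩
    · exact pg_lf_iff_not_le.2 fun h3 =>
        pg_lf_iff_not_le.1 (pg_moveLeft_lf_of_le h1 i) ((ihzl i).1 h2 h3)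
    · exact pg_lf_iff_not_le.2 fun h3 =>
        pg_lf_iff_not_le.1 (pg_lf_moveRight_of_le h2 j) ((ihyr j (PGame.mk zl zr zL zR)).2.1 h3 h1)

theorem pg_le_trans {x y z : PGame.{u}} (h1 : PGame.Le x y) (h2 : PGame.Le y z) : PGame.Le x z :=
  (pg_le_trans_aux x y z).1 h1 h2

theorem pg_lf_of_le_of_lf {x y z : PGame.{u}} (h1 : PGame.Le x y) (h2 : Lf y z) : Lf x z :=
  pg_lf_iff_not_le.2 fun h3 => pg_lf_iff_not_le.1 h2 (pg_le_trans h3 h1)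

theorem pg_lf_of_lf_of_le {x y z : PGame.{u}} (h1 : Lf x y) (h2 : PGame.Le y z) : Lf x z :=
  pg_lf_iff_not_le.2 fun h3 => pg_lf_iff_not_le.1 h1 (pg_le_trans h2 h3)

theorem pgEquiv_refl (x : PGame.{u}) : PGame.Equiv x x := ⟨pg_le_refl x, pg_le_refl x⟩

theorem pgEquiv_symm {x y : PGame.{u}} (h : PGame.Equiv x y) : PGame.Equiv y x := ⟨h.2, h.1⟩

theorem pgEquiv_trans {x y z : PGame.{u}} (h1 : PGame.Equiv x y) (h2 : PGame.Equiv y z) :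
    PGame.Equiv x z := ⟨pg_le_trans h1.1 h2.1, pg_le_trans h2.2 h1.2⟩

theorem pg_equiv_of_eqvGen {x y : PGame.{u}} (h : Relation.EqvGen PGame.Equiv x y) :
    PGame.Equiv x y := by
  induction h with
  | rel _ _ h => exact h
  | refl a => exact pgEquiv_refl a
  | symm _ _ _ ih => exact pgEquiv_symm ih
  | trans _ _ _ _ _ ih1 ih2 => exact pgEquiv_trans ih1 ih2

theorem pg_game_eq {x y : PGame.{u}} : (⟦x⟧ : Game.{u}) = ⟦y⟧ ↔ PGame.Equiv x y :=
  ⟨fun h => pg_equiv_of_eqvGen (Quotient.exact h),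
   fun h => Quotient.sound (Relation.EqvGen.rel _ _ h)⟩

/-! ### negation -/

theorem pg_neg_mk {l r : Type u} {L : l → PGame.{u}} {R : r → PGame.{u}} :
    -(PGame.mk l r L R) = PGame.mk r l (fun i => -(R i)) (fun i => -(L i)) := rfl

theorem pg_neg_le_aux : ∀ x y : PGame.{u},
    (PGame.Le (-x) (-y) ↔ PGame.Le y x) ∧ (PGame.Le (-y) (-x) ↔ PGame.Le x y) := by
  intro x
  induction x with
  | mk xl xr xL xR ihl ihr =>
  intro y
  induction y with
  | mk yl yr yL yR jhl jhr =>
  constructor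
  · rw [pg_neg_mk, pg_neg_mk, pg_le_mk, pg_le_mk]
    constructor
    · rintro ⟨h1, h2⟩
      exact ⟨fun i => pg_lf_iff_not_le.2 fun h => pg_lf_iff_not_le.1 (h2 i) ((jhl i).2.2 h),
        fun j => pg_lf_iff_not_le.2 fun h =>
          pg_lf_iff_not_le.1 (h1 j) ((ihr j (PGame.mk yl yr yL yR)).2.2 h)⟩
    · rintro ⟨h1, h2⟩
      exact ⟨fun j => pg_lf_iff_not_le.2 fun h =>
          pg_lf_iff_not_le.1 (h2 j) ((ihr j (PGame.mk yl yr yL yR)).2.1 h),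
        fun i => pg_lf_iff_not_le.2 fun h => pg_lf_iff_not_le.1 (h1 i) ((jhl i).2.1 h)⟩
  · rw [pg_neg_mk, pg_neg_mk, pg_le_mk, pg_le_mk]
    constructor
    · rintro ⟨h1, h2⟩
      exact ⟨fun i => pg_lf_iff_not_le.2 fun h =>
          pg_lf_iff_not_le.1 (h2 i) ((ihl i (PGame.mk yl yr yL yR)).1.2 h),
        fun j => pg_lf_iff_not_le.2 fun h => pg_lf_iff_not_le.1 (h1 j) ((jhr j).1.2 h)⟩
    · rintro ⟨h1, h2⟩
      exact ⟨fun j => pg_lf_iff_not_le.2 fun h => pg_lf_iff_not_le.1 (h2 j) ((jhr j).1.1 h),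
        fun i => pg_lf_iff_not_le.2 fun h =>
          pg_lf_iff_not_le.1 (h1 i) ((ihl i (PGame.mk yl yr yL yR)).1.1 h)⟩

theorem pg_neg_le_iff {x y : PGame.{u}} : PGame.Le (-x) (-y) ↔ PGame.Le y x :=
  (pg_neg_le_aux x y).1

theorem pg_neg_congr {x y : PGame.{u}} (h : PGame.Equiv x y) : PGame.Equiv (-x) (-y) :=
  ⟨pg_neg_le_iff.2 h.2, pg_neg_le_iff.2 h.1⟩

theorem pg_neg_leftEmpty {x : PGame.{u}} (h : IsEmpty x.RightMoves) : IsEmpty (-x).LeftMoves := by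
  cases x; exact h

theorem pg_neg_right_nonempty {x : PGame.{u}} (h : Nonempty x.LeftMoves) :
    Nonempty (-x).RightMoves := by
  cases x; exact h

theorem pg_neg_moveRight_forall (x : PGame.{u}) (P : PGame.{u} → Prop)
    (h : ∀ i, P (-(x.moveLeft i))) : ∀ j, P ((-x).moveRight j) := by
  cases x; intro j; exact h j

theorem pg_neg_zero_equiv : PGame.Equiv (-(0 : PGame.{u})) 0 :=
  ⟨pg_le_def.2 ⟨fun i => PEmpty.elim i, fun j => PEmpty.elim j⟩,
   pg_le_def.2 ⟨fun i => PEmpty.elim i, fun j => PEmpty.elim j⟩⟩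

/-! ### addition -/

theorem pg_add_mk {xl xr yl yr : Type u} {xL : xl → PGame.{u}} {xR : xr → PGame.{u}}
    {yL : yl → PGame.{u}} {yR : yr → PGame.{u}} :
    PGame.mk xl xr xL xR + PGame.mk yl yr yL yR =
      PGame.mk (xl ⊕ yl) (xr ⊕ yr)
        (Sum.elim (fun i => xL i + PGame.mk yl yr yL yR) (fun i => PGame.mk xl xr xL xR + yL i))
        (Sum.elim (fun i => xR i + PGame.mk yl yr yL yR) (fun i => PGame.mk xl xr xL xR + yR i)) :=
  rfl

theorem pg_add_right_aux : ∀ y x x' : PGame.{u},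
    (PGame.Le x x' → PGame.Le (x + y) (x' + y)) ∧ (Lf x x' → Lf (x + y) (x' + y)) := by
  intro y
  induction y with
  | mk yl yr yL yR ihyl ihyr =>
  intro x
  induction x with
  | mk xl xr xL xR ihxl ihxr =>
  intro x'
  induction x' with
  | mk zl zr zL zR ihzl ihzr =>
  refine ⟨fun h => ?_, fun h => ?_⟩
  · rw [pg_add_mk, pg_add_mk, pg_le_mk]
    refine ⟨fun s => ?_, fun s => ?_⟩
    · rcases s with i | k
      · exact (ihxl i (PGame.mk zl zr zL zR)).2 (pg_moveLeft_lf_of_le h i)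
      · exact pg_lf_of_le_moveLeft (Sum.inr k)
          ((ihyl k (PGame.mk xl xr xL xR) (PGame.mk zl zr zL zR)).1 h)
    · rcases s with j | k
      · exact (ihzr j).2 (pg_lf_moveRight_of_le h j)
      · exact pg_lf_of_moveRight_le (Sum.inr k)
          ((ihyr k (PGame.mk xl xr xL xR) (PGame.mk zl zr zL zR)).1 h)
  · rw [pg_add_mk, pg_add_mk]
    rcases pg_lf_def.1 h with ⟨i, hi⟩ | ⟨j, hj⟩
    · exact pg_lf_of_le_moveLeft (Sum.inl i) ((ihzl i).1 hi)
    · exact pg_lf_of_moveRight_le (Sum.inl j) ((ihxr j (PGame.mk zl zr zL zR)).1 hj)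

theorem pg_add_left_aux : ∀ x y y' : PGame.{u},
    (PGame.Le y y' → PGame.Le (x + y) (x + y')) ∧ (Lf y y' → Lf (x + y) (x + y')) := by
  intro x
  induction x with
  | mk xl xr xL xR ihxl ihxr =>
  intro y
  induction y with
  | mk yl yr yL yR ihyl ihyr =>
  intro y'
  induction y' with
  | mk zl zr zL zR ihzl ihzr =>
  refine ⟨fun h => ?_, fun h => ?_⟩
  · rw [pg_add_mk, pg_add_mk, pg_le_mk]
    refine ⟨fun s => ?_, fun s => ?_⟩
    · rcases s with i | k
      · exact pg_lf_of_le_moveLeft (Sum.inl i)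
          ((ihxl i (PGame.mk yl yr yL yR) (PGame.mk zl zr zL zR)).1 h)
      · exact (ihyl k (PGame.mk zl zr zL zR)).2 (pg_moveLeft_lf_of_le h k)
    · rcases s with j | k
      · exact pg_lf_of_moveRight_le (Sum.inl j)
          ((ihxr j (PGame.mk yl yr yL yR) (PGame.mk zl zr zL zR)).1 h)
      · exact (ihzr k).2 (pg_lf_moveRight_of_le h k)
  · rw [pg_add_mk, pg_add_mk]
    rcases pg_lf_def.1 h with ⟨i, hi⟩ | ⟨j, hj⟩
    · exact pg_lf_of_le_moveLeft (Sum.inr i) ((ihzl i).1 hi)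
    · exact pg_lf_of_moveRight_le (Sum.inr j) ((ihyr j (PGame.mk zl zr zL zR)).1 hj)

theorem pg_add_congr {a a' b b' : PGame.{u}} (h1 : PGame.Equiv a a') (h2 : PGame.Equiv b b') :
    PGame.Equiv (a + b) (a' + b') :=
  ⟨pg_le_trans ((pg_add_right_aux b a a').1 h1.1) ((pg_add_left_aux a' b b').1 h2.1),
   pg_le_trans ((pg_add_right_aux b' a' a).1 h1.2) ((pg_add_left_aux a b' b).1 h2.2)⟩

theorem pg_zero_def : (0 : PGame.{u}) = PGame.mk PEmpty PEmpty PEmpty.elim PEmpty.elim := rfl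

theorem pg_add_zero_equiv : ∀ x : PGame.{u}, PGame.Equiv (x + 0) x := by
  intro x
  induction x with
  | mk xl xr xL xR ihl ihr =>
  rw [pg_zero_def, pg_add_mk]
  refine ⟨pg_le_mk.2 ⟨fun s => ?_, fun j => ?_⟩, pg_le_mk.2 ⟨fun i => ?_, fun s => ?_⟩⟩
  · rcases s with i | e
    · exact pg_lf_of_le_moveLeft (y := PGame.mk xl xr xL xR) i (ihl i).1
    · exact e.elim
  · exact pg_lf_of_moveRight_le (Sum.inl j) (ihr j).1
  · exact pg_lf_of_le_moveLeft (Sum.inl i) (ihl i).2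
  · rcases s with j | e
    · exact pg_lf_of_moveRight_le (x := PGame.mk xl xr xL xR) j (ihr j).2
    · exact e.elim

theorem pg_isEmpty_right_add {x y : PGame.{u}} (hx : IsEmpty x.RightMoves)
    (hy : IsEmpty y.RightMoves) : IsEmpty (x + y).RightMoves := by
  cases x; cases y
  refine ⟨fun s => ?_⟩
  rcases s with j | j
  · exact hx.false j
  · exact hy.false j

theorem pg_add_one_moveLeft (x : PGame.{u}) (P : PGame.{u} → Prop)
    (h1 : ∀ i, P (x.moveLeft i + 1)) (h2 : P (x + 0)) : ∀ i, P ((x + 1).moveLeft i) := by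
  cases x with
  | mk xl xr xL xR =>
  intro i
  rcases i with i | u
  · exact h1 i
  · exact h2

theorem pg_add_one_exists (x : PGame.{u}) : ∃ i, (x + 1).moveLeft i = x + 0 := by
  cases x
  exact ⟨Sum.inr PUnit.unit, rfl⟩

theorem pg_nsmul_congr {a b : PGame.{u}} (h : PGame.Equiv a b) :
    ∀ k : ℕ, PGame.Equiv (PGame.nsmulAux k a) (PGame.nsmulAux k b)
  | 0 => pgEquiv_refl _
  | k + 1 => pg_add_congr (pg_nsmul_congr h k) h

/-! ### integer pregames -/

theorem N_rightEmpty : ∀ k : ℕ, IsEmpty (PGame.nsmulAux k (1 : PGame.{u})).RightMoves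
  | 0 => ⟨fun e => PEmpty.elim e⟩
  | k + 1 => pg_isEmpty_right_add (N_rightEmpty k) ⟨fun e => PEmpty.elim e⟩

theorem N_moveLeft : ∀ (k : ℕ) (i : (PGame.nsmulAux (k+1) (1 : PGame.{u})).LeftMoves),
    PGame.Equiv ((PGame.nsmulAux (k+1) (1 : PGame.{u})).moveLeft i) (PGame.nsmulAux k 1) := by
  intro k
  induction k with
  | zero =>
    apply pg_add_one_moveLeft (PGame.nsmulAux 0 1) (fun g => PGame.Equiv g (PGame.nsmulAux 0 1))
    · intro i; exact PEmpty.elim i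
    · exact pg_add_zero_equiv _
  | succ k ih =>
    apply pg_add_one_moveLeft (PGame.nsmulAux (k+1) 1)
      (fun g => PGame.Equiv g (PGame.nsmulAux (k+1) 1))
    · intro i
      exact pg_add_congr (ih i) (pgEquiv_refl 1)
    · exact pg_add_zero_equiv _

theorem N_le_succ : ∀ k : ℕ, PGame.Le (PGame.nsmulAux k (1 : PGame.{u})) (PGame.nsmulAux (k+1) 1) := by
  intro k
  induction k with
  | zero =>
    exact pg_le_def.2 ⟨fun i => PEmpty.elim i, fun j => (N_rightEmpty _).elim j⟩
  | succ k ih =>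
    refine pg_le_def.2 ⟨fun i => ?_, fun j => (N_rightEmpty _).elim j⟩
    obtain ⟨e, he⟩ := pg_add_one_exists (PGame.nsmulAux (k+1) (1 : PGame.{u}))
    refine pg_lf_of_le_moveLeft (y := PGame.nsmulAux (k+1) (1 : PGame.{u}) + 1) e ?_
    rw [he]
    exact pg_le_trans (N_moveLeft k i).1 (pg_le_trans ih (pg_add_zero_equiv _).2)

theorem N_lf_succ (k : ℕ) : Lf (PGame.nsmulAux k (1 : PGame.{u})) (PGame.nsmulAux (k+1) 1) := by
  obtain ⟨e, he⟩ := pg_add_one_exists (PGame.nsmulAux k (1 : PGame.{u}))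
  refine pg_lf_of_le_moveLeft (y := PGame.nsmulAux k (1 : PGame.{u}) + 1) e ?_
  rw [he]
  exact (pg_add_zero_equiv _).2

theorem N_mono {m k : ℕ} (h : m ≤ k) :
    PGame.Le (PGame.nsmulAux m (1 : PGame.{u})) (PGame.nsmulAux k 1) := by
  induction k, h using Nat.le_induction with
  | base => exact pg_le_refl _
  | succ k _ ih => exact pg_le_trans ih (N_le_succ k)

/-- An integer pregame. -/
def iP (n : ℤ) : PGame.{u} :=
  if 0 ≤ n then PGame.nsmulAux n.toNat 1 else -(PGame.nsmulAux (-n).toNat 1)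

theorem smul_one_equiv (n : ℤ) :
    ∃ X : PGame.{u}, n • (1 : Game.{u}) = ⟦X⟧ ∧ PGame.Equiv X (iP n) := by
  have ha : PGame.Equiv (1 : Game.{u}).out 1 :=
    pg_equiv_of_eqvGen (Quotient.mk_out (s := PGame.setoid) (1 : PGame.{u}))
  refine ⟨if 0 ≤ n then PGame.nsmulAux n.toNat (1 : Game.{u}).out
    else -(PGame.nsmulAux (-n).toNat (1 : Game.{u}).out), rfl, ?_⟩
  unfold iP
  split_ifs with h
  · exact pg_nsmul_congr ha _
  · exact pg_neg_congr (pg_nsmul_congr ha _)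

theorem eqInt_iff_equiv {G : PGame.{u}} {n : ℤ} :
    (⟦G⟧ : Game.{u}) = n • (1 : Game.{u}) ↔ PGame.Equiv G (iP n) := by
  obtain ⟨X, hX, hXe⟩ := smul_one_equiv.{u} n
  rw [hX, pg_game_eq]
  exact ⟨fun h => pgEquiv_trans h hXe, fun h => pgEquiv_trans h (pgEquiv_symm hXe)⟩

lemma iP_rightEmpty {n : ℤ} (hn : 0 ≤ n) : IsEmpty (iP.{u} n).RightMoves := by
  unfold iP
  rw [if_pos hn]
  exact N_rightEmpty _

lemma iP_leftEmpty {n : ℤ} (hn : n ≤ 0) : IsEmpty (iP.{u} n).LeftMoves := by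
  unfold iP
  split_ifs with h
  · have : n.toNat = 0 := by omega
    rw [this]
    exact ⟨fun i => PEmpty.elim i⟩
  · exact pg_neg_leftEmpty (N_rightEmpty _)

lemma iP_moveLeft {n : ℤ} (hn : 0 < n) (i : (iP.{u} n).LeftMoves) :
    PGame.Equiv ((iP.{u} n).moveLeft i) (iP (n - 1)) := by
  have h2 : iP.{u} n = PGame.nsmulAux ((n-1).toNat + 1) 1 := by
    rw [iP, if_pos hn.le]; congr 1; omega
  have h3 : iP.{u} (n-1) = PGame.nsmulAux (n-1).toNat 1 := by rw [iP, if_pos (by omega)]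
  rw [h3]
  revert i
  rw [h2]
  intro i
  exact N_moveLeft _ i

lemma iP_moveRight {n : ℤ} (hn : n < 0) (j : (iP.{u} n).RightMoves) :
    PGame.Equiv ((iP.{u} n).moveRight j) (iP (n + 1)) := by
  obtain ⟨m, hm⟩ : ∃ m : ℕ, (-n).toNat = m + 1 := ⟨(-n).toNat - 1, by omega⟩
  have h2 : iP.{u} n = -(PGame.nsmulAux (m+1) 1) := by rw [iP, if_neg (by omega), hm]
  have h4 : PGame.Equiv (iP.{u} (n+1)) (-(PGame.nsmulAux m 1)) := by
    rcases eq_or_lt_of_le (by omega : n + 1 ≤ 0) with h | h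
    · have hm0 : m = 0 := by omega
      rw [h, hm0, iP, if_pos le_rfl]
      exact pgEquiv_symm pg_neg_zero_equiv
    · rw [iP, if_neg (by omega)]
      have hmm : (-(n+1)).toNat = m := by omega
      rw [hmm]
      exact pgEquiv_refl _
  revert j
  rw [h2]
  exact pg_neg_moveRight_forall _ (fun g => PGame.Equiv g (iP (n+1)))
    (fun i => pgEquiv_trans (pg_neg_congr (N_moveLeft m i)) (pgEquiv_symm h4))

lemma iP_lf_succ (n : ℤ) : Lf (iP.{u} n) (iP (n + 1)) := by
  by_cases hn : 0 ≤ n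
  · have h1 : iP.{u} n = PGame.nsmulAux n.toNat 1 := by rw [iP, if_pos hn]
    have h2 : iP.{u} (n + 1) = PGame.nsmulAux (n.toNat + 1) 1 := by
      rw [iP, if_pos (by omega)]; congr 1; omega
    rw [h1, h2]
    exact N_lf_succ _
  · obtain ⟨j⟩ : Nonempty (iP.{u} n).RightMoves := by
      obtain ⟨m, hm⟩ : ∃ m : ℕ, (-n).toNat = m + 1 := ⟨(-n).toNat - 1, by omega⟩
      have h2 : iP.{u} n = -(PGame.nsmulAux (m+1) 1) := by rw [iP, if_neg hn, hm]
      rw [h2]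
      obtain ⟨e, _⟩ := pg_add_one_exists (PGame.nsmulAux m (1 : PGame.{u}))
      exact pg_neg_right_nonempty ⟨e⟩
    exact pg_lf_of_moveRight_le j (iP_moveRight (by omega) j).1

lemma iP_mono {m n : ℤ} (h : m ≤ n) : PGame.Le (iP.{u} m) (iP n) := by
  by_cases hm : 0 ≤ m
  · have h1 : iP.{u} m = PGame.nsmulAux m.toNat 1 := by rw [iP, if_pos hm]
    have h2 : iP.{u} n = PGame.nsmulAux n.toNat 1 := by rw [iP, if_pos (by omega)]
    rw [h1, h2]
    exact N_mono (by omega)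
  · by_cases hn : 0 ≤ n
    · exact pg_le_def.2 ⟨fun i => (iP_leftEmpty (by omega)).elim i,
        fun j => (iP_rightEmpty hn).elim j⟩
    · have h1 : iP.{u} m = -(PGame.nsmulAux (-m).toNat 1) := by rw [iP, if_neg hm]
      have h2 : iP.{u} n = -(PGame.nsmulAux (-n).toNat 1) := by rw [iP, if_neg hn]
      rw [h1, h2]
      exact pg_neg_le_iff.2 (N_mono (by omega))

lemma iP_le_iff {m n : ℤ} : PGame.Le (iP.{u} m) (iP n) ↔ m ≤ n := by
  refine ⟨fun h => ?_, iP_mono⟩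
  by_contra hc
  exact pg_lf_iff_not_le.1 (iP_lf_succ n) (pg_le_trans (iP_mono (by omega)) h)

def pgShortL {α β : Type u} {L : α → PGame.{u}} {R : β → PGame.{u}}
    (h : PGame.Short (PGame.mk α β L R)) (i : α) : PGame.Short (L i) := by
  cases h with
  | mk sL _ => exact sL i

def pgShortR {α β : Type u} {L : α → PGame.{u}} {R : β → PGame.{u}}
    (h : PGame.Short (PGame.mk α β L R)) (j : β) : PGame.Short (R j) := by
  cases h with
  | mk _ sR => exact sR j

def pgShortFtL {α β : Type u} {L : α → PGame.{u}} {R : β → PGame.{u}}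
    (h : PGame.Short (PGame.mk α β L R)) : Fintype α := by
  cases h; assumption

def pgShortFtR {α β : Type u} {L : α → PGame.{u}} {R : β → PGame.{u}}
    (h : PGame.Short (PGame.mk α β L R)) : Fintype β := by
  cases h; assumption

lemma exists_le_iP : ∀ G : PGame.{u}, PGame.Short G → ∃ n : ℤ, PGame.Le G (iP n) := by
  intro G
  induction G with
  | mk α β L R IHL IHR =>
  intro hs
  haveI := pgShortFtL hs
  choose f hf using fun i => IHL i (pgShortL hs i)
  obtain ⟨b, hb⟩ := (Set.finite_range f).bddAbove
  have hb0 : b ≤ max b 0 := le_max_left _ _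
  have h00 : 0 ≤ max b 0 := le_max_right _ _
  refine ⟨max b 0 + 1, pg_le_def.2 ⟨fun i => ?_, fun j => (iP_rightEmpty (by omega)).elim j⟩⟩
  have hfi : f i ≤ b := hb (Set.mem_range_self i)
  exact pg_lf_of_le_of_lf (pg_le_trans (hf i) (iP_mono (by omega))) (iP_lf_succ _)

lemma exists_iP_le : ∀ G : PGame.{u}, PGame.Short G → ∃ n : ℤ, PGame.Le (iP n) G := by
  intro G
  induction G with
  | mk α β L R IHL IHR =>
  intro hs
  haveI := pgShortFtR hs
  choose f hf using fun j => IHR j (pgShortR hs j)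
  obtain ⟨b, hb⟩ := (Set.finite_range f).bddBelow
  have hb0 : min b 0 ≤ b := min_le_left _ _
  have h00 : min b 0 ≤ 0 := min_le_right _ _
  refine ⟨min b 0 - 1, pg_le_def.2 ⟨fun i => (iP_leftEmpty (by omega)).elim i, fun j => ?_⟩⟩
  have hfj : b ≤ f j := hb (Set.mem_range_self j)
  have e : min b 0 - 1 + 1 = min b 0 := by omega
  have hl := iP_lf_succ.{u} (min b 0 - 1)
  rw [e] at hl
  exact pg_lf_of_lf_of_le hl (pg_le_trans (iP_mono (by omega)) (hf j))

/-! ### sup/inf of finite sets of integers -/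

lemma isGreatest_zSup {s : Set ℤ} (hf : s.Finite) (hn : s.Nonempty) : IsGreatest s (zSup s) := by
  have h : ∃ a, IsGreatest s a := by
    obtain ⟨b, hb⟩ := hf.bddAbove
    obtain ⟨a, ha, hmax⟩ := Int.exists_greatest_of_bdd ⟨b, fun z hz => hb hz⟩ hn
    exact ⟨a, ha, fun z hz => hmax z hz⟩
  rw [zSup, dif_pos h]
  exact h.choose_spec

lemma isLeast_zInf {s : Set ℤ} (hf : s.Finite) (hn : s.Nonempty) : IsLeast s (zInf s) := by
  have h : ∃ a, IsLeast s a := by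
    obtain ⟨b, hb⟩ := hf.bddBelow
    obtain ⟨a, ha, hmin⟩ := Int.exists_least_of_bdd ⟨b, fun z hz => hb hz⟩ hn
    exact ⟨a, ha, fun z hz => hmin z hz⟩
  rw [zInf, dif_pos h]
  exact h.choose_spec

/-! ### evaluating `lrBar` -/

lemma eqInt_lrBar {G : PGame.{u}} (h : EqInt G) :
    lBar G = rBar G ∧ (⟦G⟧ : Game) = (rBar G) • (1 : Game) := by
  cases G with
  | mk α β L R =>
    rw [lBar, rBar, lrBar, dif_pos h]
    exact ⟨rfl, h.choose_spec⟩

lemma not_eqInt_lrBar {α β : Type u} {L : α → PGame.{u}} {R : β → PGame.{u}}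
    (h : ¬ EqInt (PGame.mk α β L R)) :
    lBar (PGame.mk α β L R) = zSup (Set.range fun i : α => rBar (L i) + 1) ∧
      rBar (PGame.mk α β L R) = zInf (Set.range fun j : β => lBar (R j) - 1) := by
  rw [lBar, rBar, lrBar, dif_neg h]
  exact ⟨rfl, rfl⟩

/-! ### `EqInt` facts -/

lemma eqInt_of_equiv_iP {G : PGame.{u}} {n : ℤ} (h : PGame.Equiv G (iP n)) : EqInt G :=
  ⟨n, eqInt_iff_equiv.2 h⟩

lemma equiv_iP_of_eqInt {G : PGame.{u}} (h : EqInt G) : PGame.Equiv G (iP (rBar G)) :=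
  eqInt_iff_equiv.1 (eqInt_lrBar h).2

lemma eqInt_of_leftEmpty (G : PGame.{u}) (hs : PGame.Short G) (hα : IsEmpty G.LeftMoves) :
    EqInt G := by
  obtain ⟨b, hb⟩ := exists_iP_le G hs
  obtain ⟨c, hc⟩ := exists_le_iP G hs
  obtain ⟨n₀, hn₀, hmax⟩ := Int.exists_greatest_of_bdd
    (⟨c, fun z hz => iP_le_iff.1 (pg_le_trans hz hc)⟩ :
      ∃ B, ∀ z : ℤ, PGame.Le (iP.{u} z) G → z ≤ B)
    ⟨b, hb⟩
  refine eqInt_of_equiv_iP (n := n₀) ⟨?_, hn₀⟩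
  refine pg_le_def.2 ⟨fun i => hα.elim i, fun j => ?_⟩
  by_cases h0 : 0 ≤ n₀
  · exact ((iP_rightEmpty h0).elim j)
  · refine pg_lf_iff_not_le.2 fun hle => ?_
    have h1 : PGame.Le (iP.{u} (n₀ + 1)) G := pg_le_trans (iP_moveRight (by omega) j).2 hle
    exact absurd (hmax (n₀ + 1) h1) (by omega)

lemma eqInt_of_rightEmpty (G : PGame.{u}) (hs : PGame.Short G) (hβ : IsEmpty G.RightMoves) :
    EqInt G := by
  obtain ⟨b, hb⟩ := exists_iP_le G hs
  obtain ⟨c, hc⟩ := exists_le_iP G hs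
  obtain ⟨n₀, hn₀, hmin⟩ := Int.exists_least_of_bdd
    (⟨b, fun z hz => iP_le_iff.1 (pg_le_trans hb hz)⟩ :
      ∃ B, ∀ z : ℤ, PGame.Le G (iP.{u} z) → B ≤ z)
    ⟨c, hc⟩
  refine eqInt_of_equiv_iP (n := n₀) ⟨hn₀, ?_⟩
  refine pg_le_def.2 ⟨fun i => ?_, fun j => hβ.elim j⟩
  by_cases h0 : n₀ ≤ 0
  · exact ((iP_leftEmpty h0).elim i)
  · refine pg_lf_iff_not_le.2 fun hle => ?_
    have h1 : PGame.Le G (iP.{u} (n₀ - 1)) := pg_le_trans hle (iP_moveLeft (by omega) i).1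
    exact absurd (hmin (n₀ - 1) h1) (by omega)

/-! ### the key induction -/

lemma key : ∀ G : PGame.{u}, PGame.Short G →
    (∀ n : ℤ, PGame.Le (iP n) G → n ≤ rBar G) ∧
    (∀ n : ℤ, PGame.Le G (iP n) → lBar G ≤ n) ∧
    (∀ n : ℤ, Lf (iP n) G → n + 1 ≤ lBar G) ∧
    (∀ n : ℤ, Lf G (iP n) → rBar G ≤ n - 1) := by
  intro G
  induction G with
  | mk α β L R IHL IHR =>
  intro hs
  by_cases hi : EqInt (PGame.mk α β L R)
  · obtain ⟨heq, _⟩ := eqInt_lrBar hi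
    have hequiv := equiv_iP_of_eqInt hi
    refine ⟨?_, ?_, ?_, ?_⟩
    · intro n h
      exact iP_le_iff.1 (pg_le_trans h hequiv.1)
    · intro n h
      rw [heq]
      exact iP_le_iff.1 (pg_le_trans hequiv.2 h)
    · intro n h
      have hnle : ¬ PGame.Le (PGame.mk α β L R) (iP.{u} n) := pg_lf_iff_not_le.1 h
      rw [heq]
      by_contra hc
      push_neg at hc
      exact hnle (pg_le_trans hequiv.1 (iP_le_iff.2 (by omega)))
    · intro n h
      have hnle : ¬ PGame.Le (iP.{u} n) (PGame.mk α β L R) := pg_lf_iff_not_le.1 h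
      by_contra hc
      push_neg at hc
      exact hnle (pg_le_trans (iP_le_iff.2 (by omega)) hequiv.2)
  · have hα : Nonempty α := by
      by_contra h
      rw [not_nonempty_iff] at h
      exact hi (eqInt_of_leftEmpty (PGame.mk α β L R) hs h)
    have hβ : Nonempty β := by
      by_contra h
      rw [not_nonempty_iff] at h
      exact hi (eqInt_of_rightEmpty (PGame.mk α β L R) hs h)
    haveI := pgShortFtL hs
    haveI := pgShortFtR hs
    obtain ⟨hl, hr⟩ := not_eqInt_lrBar hi
    have hgr := isGreatest_zSup (Set.finite_range fun i : α => rBar (L i) + 1)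
      (Set.range_nonempty _)
    have hls := isLeast_zInf (Set.finite_range fun j : β => lBar (R j) - 1)
      (Set.range_nonempty _)
    have s1 : ∀ n : ℤ, PGame.Le (iP.{u} n) (PGame.mk α β L R) → n ≤ rBar (PGame.mk α β L R) := by
      intro n h
      rw [hr]
      obtain ⟨j, hj⟩ := hls.1
      beta_reduce at hj
      have h3 := (IHR j (pgShortR hs j)).2.2.1 n (pg_lf_moveRight_of_le h j)
      rw [← hj]
      omega
    have s2 : ∀ n : ℤ, PGame.Le (PGame.mk α β L R) (iP.{u} n) → lBar (PGame.mk α β L R) ≤ n := by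
      intro n h
      rw [hl]
      obtain ⟨i, hi'⟩ := hgr.1
      beta_reduce at hi'
      have h3 := (IHL i (pgShortL hs i)).2.2.2 n (pg_moveLeft_lf_of_le h i)
      rw [← hi']
      omega
    have hA : ∀ (n : ℤ) (i : α), PGame.Le (iP.{u} n) (L i) → n + 1 ≤ lBar (PGame.mk α β L R) := by
      intro n i hle
      rw [hl]
      have h1 := (IHL i (pgShortL hs i)).1 n hle
      have h2 := hgr.2 (Set.mem_range_self i)
      omega
    have hB : ∀ (n : ℤ) (j : β), PGame.Le (R j) (iP.{u} n) → rBar (PGame.mk α β L R) ≤ n - 1 := by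
      intro n j hle
      rw [hr]
      have h1 := (IHR j (pgShortR hs j)).2.1 n hle
      have h2 := hls.2 (Set.mem_range_self j)
      omega
    have s3 : ∀ k : ℕ, ∀ n : ℤ, (-n).toNat ≤ k → Lf (iP.{u} n) (PGame.mk α β L R) →
        n + 1 ≤ lBar (PGame.mk α β L R) := by
      intro k
      induction k with
      | zero =>
        intro n hk h
        rcases pg_lf_def.1 h with ⟨i, hle⟩ | ⟨j, hle⟩
        · exact hA n i hle
        · exact ((iP_rightEmpty (by omega)).elim j)
      | succ k IHk =>
        intro n hk h
        rcases pg_lf_def.1 h with ⟨i, hle⟩ | ⟨j, hle⟩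
        · exact hA n i hle
        · by_cases h0 : 0 ≤ n
          · exact ((iP_rightEmpty h0).elim j)
          · have h1 : PGame.Le (iP.{u} (n + 1)) (PGame.mk α β L R) :=
              pg_le_trans (iP_moveRight (by omega) j).2 hle
            have h2 : Lf (iP.{u} (n + 1)) (PGame.mk α β L R) :=
              pg_lf_iff_not_le.2 fun hle2 => hi (eqInt_of_equiv_iP (n := n + 1) ⟨hle2, h1⟩)
            have h3 := IHk (n + 1) (by omega) h2
            omega
    have s4 : ∀ k : ℕ, ∀ n : ℤ, n.toNat ≤ k → Lf (PGame.mk α β L R) (iP.{u} n) →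
        rBar (PGame.mk α β L R) ≤ n - 1 := by
      intro k
      induction k with
      | zero =>
        intro n hk h
        rcases pg_lf_def.1 h with ⟨i, hle⟩ | ⟨j, hle⟩
        · exact ((iP_leftEmpty (by omega)).elim i)
        · exact hB n j hle
      | succ k IHk =>
        intro n hk h
        rcases pg_lf_def.1 h with ⟨i, hle⟩ | ⟨j, hle⟩
        · by_cases h0 : n ≤ 0
          · exact ((iP_leftEmpty h0).elim i)
          · have h1 : PGame.Le (PGame.mk α β L R) (iP.{u} (n - 1)) :=
              pg_le_trans hle (iP_moveLeft (by omega) i).1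
            have h2 : Lf (PGame.mk α β L R) (iP.{u} (n - 1)) :=
              pg_lf_iff_not_le.2 fun hle2 => hi (eqInt_of_equiv_iP (n := n - 1) ⟨h1, hle2⟩)
            have h3 := IHk (n - 1) (by omega) h2
            omega
        · exact hB n j hle
    exact ⟨s1, s2, fun n h => s3 (-n).toNat n le_rfl h, fun n h => s4 n.toNat n le_rfl h⟩

end Temper

open Temper in
/-- If `G` is short and not equal to an integer, then `ρ̄(G) < λ̄(G)`. -/
theorem rBar_lt_lBar (G : PGame) [G.Short] (hG : ¬ EqInt G) :
    rBar G < lBar G := by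
  obtain ⟨s1, s2, s3, s4⟩ := key G ‹_›
  by_cases h : PGame.Le G (iP (rBar G))
  · by_cases h2 : PGame.Le (iP (rBar G)) G
    · exact absurd (eqInt_of_equiv_iP ⟨h, h2⟩) hG
    · have := s4 (rBar G) (pg_not_le_iff_lf.1 h2)
      omega
  · have := s3 (rBar G) (pg_not_le_iff_lf.1 h)
    omega
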